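/- arXiv:2307.03837 — 4 statements merged into one kernel-verified Lean document; each statement's English description precedes it below -/
import Mathlib

section
/- The force term F : M∖Δ → M, F(q) = ∇U(q) / (2(1 + U(q)) U(q)^{1/α}), with ∇U the mass-metric gradient of U, is bounded: there exists a constant C > 0 such that ‖F(q)‖_M ≤ C for all q ∈ M∖Δ. -/
open scoped BigOperators
open Filter MeasureTheory

noncomputable section

/-- The space of configurations of `n` points in `ℝ^d`. -/
abbrev Vec (d n : ℕ) := Fin n → EuclideanSpace ℝ (Fin d)

/-- The mass inner product `⟨q,q'⟩_M = ∑ i, m i ⟨q i, q' i⟩`. -/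
def massInner {d n : ℕ} (m : Fin n → ℝ) (q q' : Vec d n) : ℝ :=
  ∑ i, m i * (inner ℝ (q i) (q' i) : ℝ)

/-- The mass norm. -/
def massNorm {d n : ℕ} (m : Fin n → ℝ) (q : Vec d n) : ℝ :=
  Real.sqrt (massInner m q q)

/-- The center-of-mass-zero configuration space `M`. -/
def configSet {d n : ℕ} (m : Fin n → ℝ) : Set (Vec d n) :=
  {q | ∑ i, m i • q i = 0}

/-- The collision set `Δ`. -/
def collSet (d n : ℕ) : Set (Vec d n) :=
  {q | ∃ i j : Fin n, i ≠ j ∧ q i = q j}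

/-- The (negative of the) potential `U(q) = ∑_{i<j} Z i j ‖q i - q j‖^(-α)`. -/
def potU {d n : ℕ} (Z : Fin n → Fin n → ℝ) (α : ℝ) (q : Vec d n) : ℝ :=
  ∑ p ∈ Finset.univ.filter (fun p : Fin n × Fin n => p.1 < p.2),
    Z p.1 p.2 * ‖q p.1 - q p.2‖ ^ (-α)

/- Auxiliary material -/

def pairMap {d n : ℕ} (p : Fin n × Fin n) : Vec d n →L[ℝ] EuclideanSpace ℝ (Fin d) :=
  (ContinuousLinearMap.proj p.1 : Vec d n →L[ℝ] EuclideanSpace ℝ (Fin d)) -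
    (ContinuousLinearMap.proj p.2 : Vec d n →L[ℝ] EuclideanSpace ℝ (Fin d))

lemma pairMap_apply {d n : ℕ} (p : Fin n × Fin n) (h : Vec d n) :
    pairMap p h = h p.1 - h p.2 := rfl

lemma norm_rpow_eq {d : ℕ} (α : ℝ) (x : EuclideanSpace ℝ (Fin d)) :
    (‖x‖ ^ 2 : ℝ) ^ (-α/2) = ‖x‖ ^ (-α) := by
  rw [← Real.rpow_natCast ‖x‖ 2, ← Real.rpow_mul (norm_nonneg x)]
  norm_num
  congr 1
  ring

lemma pair_hasFDerivAt {d n : ℕ} (α : ℝ) (p : Fin n × Fin n) (q : Vec d n)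
    (hq : q p.1 ≠ q p.2) :
    HasFDerivAt (fun q : Vec d n => ‖q p.1 - q p.2‖ ^ (-α))
      (((-α/2) * (‖q p.1 - q p.2‖ ^ 2 : ℝ) ^ (-α/2 - 1)) •
        ((2:ℕ) • (innerSL ℝ (q p.1 - q p.2)).comp (pairMap p))) q := by
  have hr : q p.1 - q p.2 ≠ 0 := sub_ne_zero.mpr hq
  have h1 : HasFDerivAt (fun q : Vec d n => ‖(pairMap p) q‖ ^ 2)
      ((2:ℕ) • (innerSL ℝ ((pairMap p) q)).comp (pairMap p)) q :=
    (pairMap p).hasFDerivAt.norm_sq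
  have ht : (‖(pairMap p) q‖ ^ 2 : ℝ) ≠ 0 :=
    pow_ne_zero 2 (norm_ne_zero_iff.mpr (by rw [pairMap_apply]; exact hr))
  have h2 : HasDerivAt (fun t : ℝ => t ^ (-α/2))
      ((-α/2) * (‖(pairMap p) q‖ ^ 2 : ℝ) ^ (-α/2 - 1)) (‖(pairMap p) q‖ ^ 2) :=
    Real.hasDerivAt_rpow_const (Or.inl ht)
  have h3 := h2.comp_hasFDerivAt q h1
  have hfun : (fun q : Vec d n => ‖q p.1 - q p.2‖ ^ (-α))
      = fun q : Vec d n => ((‖(pairMap p) q‖ ^ 2 : ℝ) ^ (-α/2)) := by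
    funext y
    rw [pairMap_apply, norm_rpow_eq]
  rw [hfun]
  simpa only [pairMap_apply, Function.comp_def] using h3

lemma massInner_self_eq {d n : ℕ} (m : Fin n → ℝ) (g : Vec d n) :
    massInner m g g = ∑ i, m i * ‖g i‖ ^ 2 := by
  unfold massInner
  refine Finset.sum_congr rfl fun i _ => ?_
  rw [real_inner_self_eq_norm_sq]

lemma massNorm_smul {d n : ℕ} (m : Fin n → ℝ) (a : ℝ) (g : Vec d n) :
    massNorm m (a • g) = |a| * massNorm m g := by
  unfold massNorm
  have h : massInner m (a • g) (a • g) = a ^ 2 * massInner m g g := by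
    unfold massInner
    rw [Finset.mul_sum]
    refine Finset.sum_congr rfl fun i _ => ?_
    have : (a • g) i = a • (g i) := rfl
    rw [this, real_inner_smul_left, real_inner_smul_right]
    ring
  rw [h, Real.sqrt_mul (sq_nonneg a), Real.sqrt_sq_eq_abs]

set_option maxHeartbeats 1000000 in
/-- The force term `F(q) = ∇U(q)/(2(1+U(q))U(q)^{1/α})` (with `∇U` the
mass-metric gradient of `U` on `M`) is bounded in mass norm, uniformly on `M∖Δ`. -/
theorem stmt10 {d n : ℕ} (hd : 1 ≤ d) (hn : 2 ≤ n)
    (m : Fin n → ℝ) (hm : ∀ i, 0 < m i)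
    (α : ℝ) (hα0 : 0 < α) (hα2 : α < 2)
    (Z : Fin n → Fin n → ℝ) (hZ : ∀ i j : Fin n, i < j → 0 < Z i j) :
    ∃ Cb : ℝ, 0 < Cb ∧ ∀ q : Vec d n, q ∈ configSet m → q ∉ collSet d n →
      ∀ (Dq : Vec d n →L[ℝ] ℝ) (g : Vec d n),
        HasFDerivAt (potU Z α) Dq q → g ∈ configSet m →
        (∀ h ∈ configSet m, massInner m g h = Dq h) →
        massNorm m ((2 * (1 + potU Z α q) * (potU Z α q) ^ (1 / α))⁻¹ • g) ≤ Cb := by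
  classical
  have hα : α ≠ 0 := ne_of_gt hα0
  set S : Finset (Fin n × Fin n) := Finset.univ.filter (fun p : Fin n × Fin n => p.1 < p.2)
    with hSdef
  have hp0 : ((⟨0, by omega⟩ : Fin n), (⟨1, by omega⟩ : Fin n)) ∈ S := by
    rw [hSdef]
    exact Finset.mem_filter.mpr ⟨Finset.mem_univ _, by exact Fin.mk_lt_mk.mpr zero_lt_one⟩
  have hSne : S.Nonempty := ⟨_, hp0⟩
  have hFinNe : (Finset.univ : Finset (Fin n)).Nonempty := ⟨⟨0, by omega⟩, Finset.mem_univ _⟩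
  set μ : ℝ := Finset.univ.inf' hFinNe m with hμdef
  have hμpos : 0 < μ := by
    rw [hμdef, Finset.lt_inf'_iff]
    exact fun i _ => hm i
  have hμle : ∀ i : Fin n, μ ≤ m i := fun i => Finset.inf'_le m (Finset.mem_univ i)
  have hsμ : 0 < Real.sqrt μ := Real.sqrt_pos.mpr hμpos
  set S' : ℝ := ∑ p ∈ S, (Z p.1 p.2) ^ (-1/α) with hS'def
  have hZpos : ∀ p ∈ S, 0 < Z p.1 p.2 := fun p hp => hZ _ _ (Finset.mem_filter.mp hp).2
  have hS'0 : 0 ≤ S' := Finset.sum_nonneg fun p hp => Real.rpow_nonneg (hZpos p hp).le _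
  refine ⟨α * S' / Real.sqrt μ + 1, by positivity, ?_⟩
  intro q hqM hqΔ Dq g hDq hgM hg
  set U : ℝ := potU Z α q with hUdef
  have hne : ∀ p ∈ S, q p.1 ≠ q p.2 := by
    intro p hp h
    exact hqΔ ⟨p.1, p.2, ne_of_lt (Finset.mem_filter.mp hp).2, h⟩
  set r : Fin n × Fin n → EuclideanSpace ℝ (Fin d) := fun p => q p.1 - q p.2 with hrdef
  have hrpos : ∀ p ∈ S, (0:ℝ) < ‖r p‖ :=
    fun p hp => norm_pos_iff.mpr (sub_ne_zero.mpr (hne p hp))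
  have hUeq : U = ∑ p ∈ S, Z p.1 p.2 * ‖r p‖ ^ (-α) := rfl
  have hU : 0 < U := by
    rw [hUeq]
    exact Finset.sum_pos
      (fun p hp => mul_pos (hZpos p hp) (Real.rpow_pos_of_pos (hrpos p hp) _)) hSne
  -- the explicit derivative
  set Dp : Fin n × Fin n → (Vec d n →L[ℝ] ℝ) := fun p =>
    ((-α/2) * (‖r p‖ ^ 2 : ℝ) ^ (-α/2 - 1)) • ((2:ℕ) • (innerSL ℝ (r p)).comp (pairMap p))
    with hDpdef
  have hDtot : HasFDerivAt (potU Z α) (∑ p ∈ S, Z p.1 p.2 • Dp p) q := by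
    have h : HasFDerivAt (fun q : Vec d n => ∑ p ∈ S, Z p.1 p.2 * ‖q p.1 - q p.2‖ ^ (-α))
        (∑ p ∈ S, Z p.1 p.2 • Dp p) q :=
      HasFDerivAt.fun_sum fun p hp => (pair_hasFDerivAt α p q (hne p hp)).const_mul (Z p.1 p.2)
    exact h
  have hDqeq : Dq = ∑ p ∈ S, Z p.1 p.2 • Dp p := hDq.unique hDtot
  set B : ℝ := 2 * α * ∑ p ∈ S, Z p.1 p.2 * ‖r p‖ ^ (-α - 1) with hBdef
  have hB0 : 0 ≤ B := by
    refine mul_nonneg (by positivity) (Finset.sum_nonneg fun p hp => ?_)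
    exact mul_nonneg (hZpos p hp).le (Real.rpow_nonneg (norm_nonneg _) _)
  -- evaluate the derivative at g and bound it
  have hDg : massInner m g g ≤ B * ‖g‖ := by
    rw [hg g hgM, hDqeq]
    have happ : (∑ p ∈ S, Z p.1 p.2 • Dp p) g
        = ∑ p ∈ S, Z p.1 p.2 * (((-α/2) * ((‖r p‖ ^ 2 : ℝ) ^ (-α/2 - 1))) *
            (2 * (inner ℝ (r p) (g p.1 - g p.2) : ℝ))) := by
      rw [ContinuousLinearMap.sum_apply]
      refine Finset.sum_congr rfl fun p hp => ?_
      rw [ContinuousLinearMap.smul_apply, hDpdef]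
      simp only [ContinuousLinearMap.smul_apply, ContinuousLinearMap.coe_smul',
        Pi.smul_apply, ContinuousLinearMap.comp_apply, innerSL_apply_apply, pairMap_apply,
        smul_eq_mul, nsmul_eq_mul]
      push_cast
      ring
    rw [happ]
    have hBg : B * ‖g‖ = ∑ p ∈ S, 2 * α * (Z p.1 p.2 * ‖r p‖ ^ (-α - 1)) * ‖g‖ := by
      rw [hBdef, Finset.mul_sum, Finset.sum_mul]
    rw [hBg]
    refine Finset.sum_le_sum fun p hp => ?_
    have hx : (0:ℝ) < ‖r p‖ := hrpos p hp
    have hz : (0:ℝ) < Z p.1 p.2 := hZpos p hp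
    have hT : ((‖r p‖ ^ 2 : ℝ)) ^ (-α/2 - 1) = ‖r p‖ ^ (-α - 2) := by
      rw [← Real.rpow_natCast ‖r p‖ 2, ← Real.rpow_mul hx.le]
      congr 1
      push_cast
      ring
    have hxp : ‖r p‖ ^ (-α - 1) = ‖r p‖ ^ (-α - 2) * ‖r p‖ := by
      rw [show (-α - 1 : ℝ) = (-α - 2) + 1 by ring, Real.rpow_add_one hx.ne']
    have hip : |(inner ℝ (r p) (g p.1 - g p.2) : ℝ)| ≤ ‖r p‖ * (2 * ‖g‖) := by
      refine (abs_real_inner_le_norm _ _).trans ?_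
      refine mul_le_mul_of_nonneg_left ?_ (norm_nonneg _)
      calc ‖g p.1 - g p.2‖ ≤ ‖g p.1‖ + ‖g p.2‖ := norm_sub_le _ _
        _ ≤ ‖g‖ + ‖g‖ := add_le_add (norm_le_pi_norm g p.1) (norm_le_pi_norm g p.2)
        _ = 2 * ‖g‖ := by ring
    rw [hT, hxp]
    set A : ℝ := ‖r p‖ ^ (-α - 2) with hAdef
    have hA0 : 0 ≤ A := Real.rpow_nonneg hx.le _
    set ip : ℝ := (inner ℝ (r p) (g p.1 - g p.2) : ℝ) with hipdef
    calc Z p.1 p.2 * ((-α/2) * A * (2 * ip)) = (α * Z p.1 p.2 * A) * (-ip) := by ring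
      _ ≤ (α * Z p.1 p.2 * A) * |ip| := by
          refine mul_le_mul_of_nonneg_left (neg_le_abs ip) (by positivity)
      _ ≤ (α * Z p.1 p.2 * A) * (‖r p‖ * (2 * ‖g‖)) := by
          refine mul_le_mul_of_nonneg_left hip (by positivity)
      _ = 2 * α * (Z p.1 p.2 * (A * ‖r p‖)) * ‖g‖ := by ring
  -- mass norm of g in terms of B
  set NM : ℝ := massNorm m g with hNMdef
  have hNM0 : 0 ≤ NM := Real.sqrt_nonneg _
  have hmassnn : 0 ≤ massInner m g g := by
    rw [massInner_self_eq]
    exact Finset.sum_nonneg fun i _ => mul_nonneg (hm i).le (sq_nonneg _)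
  have hNMsq : NM ^ 2 = massInner m g g := Real.sq_sqrt hmassnn
  have hgle : Real.sqrt μ * ‖g‖ ≤ NM := by
    have h1 : μ * ‖g‖ ^ 2 ≤ massInner m g g := by
      rw [massInner_self_eq]
      obtain ⟨i0, -, hi0⟩ := Finset.exists_max_image Finset.univ (fun i => ‖g i‖) hFinNe
      have hgi : ‖g‖ ≤ ‖g i0‖ :=
        (pi_norm_le_iff_of_nonneg (norm_nonneg _)).mpr fun i => hi0 i (Finset.mem_univ i)
      calc μ * ‖g‖ ^ 2 ≤ m i0 * ‖g i0‖ ^ 2 :=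
            mul_le_mul (hμle i0) (pow_le_pow_left₀ (norm_nonneg g) hgi 2)
              (sq_nonneg _) (hm i0).le
        _ ≤ ∑ i, m i * ‖g i‖ ^ 2 :=
            Finset.single_le_sum (f := fun i => m i * ‖g i‖ ^ 2)
              (fun i _ => mul_nonneg (hm i).le (sq_nonneg _)) (Finset.mem_univ i0)
    have h2 := Real.sqrt_le_sqrt h1
    rwa [Real.sqrt_mul hμpos.le, Real.sqrt_sq (norm_nonneg g)] at h2
  have hNMle : NM ≤ B / Real.sqrt μ := by
    rw [le_div_iff₀ hsμ]
    rcases eq_or_lt_of_le hNM0 with h0 | h0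
    · rw [← h0, zero_mul]; exact hB0
    · have h2 : NM ^ 2 ≤ B * ‖g‖ := by rw [hNMsq]; exact hDg
      have h3 : (NM * Real.sqrt μ) * NM ≤ B * NM := by
        calc (NM * Real.sqrt μ) * NM = Real.sqrt μ * NM ^ 2 := by ring
          _ ≤ Real.sqrt μ * (B * ‖g‖) := mul_le_mul_of_nonneg_left h2 hsμ.le
          _ = B * (Real.sqrt μ * ‖g‖) := by ring
          _ ≤ B * NM := mul_le_mul_of_nonneg_left hgle hB0
      exact le_of_mul_le_mul_right h3 h0
  -- bound B by the potential
  set β : ℝ := 1 + 1/α with hβdef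
  have hβ0 : 0 ≤ β := by positivity
  have hBle : B ≤ 2 * α * (S' * U ^ β) := by
    rw [hBdef, hS'def, Finset.sum_mul]
    refine mul_le_mul_of_nonneg_left (Finset.sum_le_sum fun p hp => ?_) (by positivity)
    have hx : (0:ℝ) < ‖r p‖ := hrpos p hp
    have hz : (0:ℝ) < Z p.1 p.2 := hZpos p hp
    have ha : (0:ℝ) < ‖r p‖ ^ (-α) := Real.rpow_pos_of_pos hx _
    have step1 : ‖r p‖ ^ (-α - 1) = (‖r p‖ ^ (-α)) ^ β := by
      rw [← Real.rpow_mul hx.le]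
      congr 1
      rw [hβdef]
      linear_combination mul_one_div_cancel hα
    have step2 : Z p.1 p.2 * ‖r p‖ ^ (-α) ≤ U := by
      rw [hUeq]
      exact Finset.single_le_sum (f := fun p => Z p.1 p.2 * ‖r p‖ ^ (-α))
        (fun p' hp' => mul_nonneg (hZpos p' hp').le (Real.rpow_nonneg (norm_nonneg _) _)) hp
    have step3 : (‖r p‖ ^ (-α)) ^ β ≤ (U / Z p.1 p.2) ^ β := by
      refine Real.rpow_le_rpow ha.le ?_ hβ0
      rw [le_div_iff₀ hz]
      linarith [step2]
    have hβeq : (-1/α : ℝ) = 1 - β := by rw [hβdef]; ring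
    calc Z p.1 p.2 * ‖r p‖ ^ (-α - 1) = Z p.1 p.2 * (‖r p‖ ^ (-α)) ^ β := by rw [step1]
      _ ≤ Z p.1 p.2 * (U / Z p.1 p.2) ^ β := mul_le_mul_of_nonneg_left step3 hz.le
      _ = (Z p.1 p.2) ^ (-1/α) * U ^ β := by
          rw [Real.div_rpow hU.le hz.le, hβeq, Real.rpow_sub hz, Real.rpow_one]
          field_simp
  -- finish
  have hA1 : (0:ℝ) < U ^ (1/α) := Real.rpow_pos_of_pos hU _
  have hc : (0:ℝ) < 2 * (1 + U) * U ^ (1/α) := by positivity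
  have hUβ : U ^ β = U * U ^ (1/α) := by
    rw [hβdef, Real.rpow_add hU, Real.rpow_one]
  rw [massNorm_smul, abs_of_pos (inv_pos.mpr hc)]
  calc (2 * (1 + U) * U ^ (1/α))⁻¹ * NM
      ≤ (2 * (1 + U) * U ^ (1/α))⁻¹ * (B / Real.sqrt μ) := by
        exact mul_le_mul_of_nonneg_left hNMle (inv_pos.mpr hc).le
    _ ≤ (2 * (1 + U) * U ^ (1/α))⁻¹ * ((2 * α * (S' * U ^ β)) / Real.sqrt μ) := by
        refine mul_le_mul_of_nonneg_left ?_ (inv_pos.mpr hc).le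
        exact div_le_div_of_nonneg_right hBle hsμ.le
    _ = (α * S' / Real.sqrt μ) * (U / (1 + U)) := by
        rw [hUβ]
        field_simp
    _ ≤ (α * S' / Real.sqrt μ) * 1 := by
        refine mul_le_mul_of_nonneg_left ?_ (by positivity)
        rw [div_le_one (by linarith)]
        linarith
    _ ≤ α * S' / Real.sqrt μ + 1 := by
        rw [mul_one]
        linarith
end
end

section
/- For α > 0 let f : ℝ² → ℝ be defined by f(x_1,x_2) = (1/|x_1|^α + 1/|x_2|^α)^{−1/α} if x_1 ≠ 0 and x_2 ≠ 0, and f(x_1,x_2) = 0 otherwise. Then f is positively homogeneous of degree 1 (f(λx) = λ f(x) for λ > 0), f is Lipschitz continuous on ℝ², but f is not continuously differentiable on ℝ². -/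
noncomputable section
open Real Set

/-- The function `f(x₁,x₂) = (1/|x₁|^α + 1/|x₂|^α)^{−1/α}` away from the axes,
extended by `0` to all of `ℝ²`. -/
def fex (α : ℝ) (x : EuclideanSpace ℝ (Fin 2)) : ℝ :=
  if x 0 ≠ 0 ∧ x 1 ≠ 0 then (|x 0| ^ (-α) + |x 1| ^ (-α)) ^ (-1 / α) else 0

namespace S11

variable {α a b a' b' s : ℝ}

/-- convexity of `t ↦ t ^ (-α)` on `(0, ∞)` -/
lemma convexOn_neg_rpow (hα : 0 < α) : ConvexOn ℝ (Ioi (0:ℝ)) fun t : ℝ => t ^ (-α) := by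
  have hint : interior (Ioi (0:ℝ)) = Ioi 0 := isOpen_Ioi.interior_eq
  refine convexOn_of_hasDerivWithinAt2_nonneg (f' := fun t => (-α) * t ^ (-α - 1))
    (f'' := fun t => (-α) * ((-α - 1) * t ^ (-α - 1 - 1))) (convex_Ioi 0) ?_ ?_ ?_ ?_
  · intro x hx
    exact ((Real.hasDerivAt_rpow_const (Or.inl (ne_of_gt hx))).continuousAt).continuousWithinAt
  · intro x hx
    rw [hint] at hx
    exact (Real.hasDerivAt_rpow_const (Or.inl (ne_of_gt hx))).hasDerivWithinAt
  · intro x hx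
    rw [hint] at hx
    exact ((Real.hasDerivAt_rpow_const (p := -α - 1)
      (Or.inl (ne_of_gt hx))).const_mul (-α)).hasDerivWithinAt
  · intro x hx
    rw [hint] at hx
    have h1 : (0:ℝ) < x ^ (-α - 1 - 1) := Real.rpow_pos_of_pos hx _
    show (0:ℝ) ≤ (-α) * ((-α - 1) * x ^ (-α - 1 - 1))
    nlinarith [mul_pos (mul_pos hα (show (0:ℝ) < α + 1 by linarith)) h1]

/-- the basic two-variable function -/
def G (α a b : ℝ) : ℝ := (a ^ (-α) + b ^ (-α)) ^ (-1 / α)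

lemma S_pos (ha : 0 < a) (hb : 0 < b) : 0 < a ^ (-α) + b ^ (-α) :=
  add_pos (Real.rpow_pos_of_pos ha _) (Real.rpow_pos_of_pos hb _)

lemma G_pos (ha : 0 < a) (hb : 0 < b) : 0 < G α a b :=
  Real.rpow_pos_of_pos (S_pos ha hb) _

lemma G_comm : G α a b = G α b a := by rw [G, G, add_comm]

lemma rpow_neg_inv_cancel (hα : 0 < α) {s : ℝ} (hs : 0 < s) :
    (s ^ (-1 / α)) ^ (-α) = s := by
  rw [← Real.rpow_mul hs.le, show -1 / α * -α = 1 by field_simp, Real.rpow_one]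

lemma rpow_neg_inv_cancel' (hα : 0 < α) {s : ℝ} (hs : 0 < s) :
    (s ^ (-α)) ^ (-1 / α) = s := by
  rw [← Real.rpow_mul hs.le, show -α * (-1 / α) = 1 by field_simp, Real.rpow_one]

lemma G_rpow (hα : 0 < α) (ha : 0 < a) (hb : 0 < b) :
    (G α a b) ^ (-α) = a ^ (-α) + b ^ (-α) :=
  rpow_neg_inv_cancel hα (S_pos ha hb)

lemma G_lt_left (hα : 0 < α) (ha : 0 < a) (hb : 0 < b) : G α a b < a := by
  by_contra h
  push_neg at h
  have h2 : (G α a b) ^ (-α) ≤ a ^ (-α) :=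
    Real.rpow_le_rpow_of_nonpos ha h (by linarith)
  rw [G_rpow hα ha hb] at h2
  have := Real.rpow_pos_of_pos hb (-α)
  linarith

lemma G_mono (hα : 0 < α) (ha : 0 < a) (hb : 0 < b) (ha' : a ≤ a') (hb' : b ≤ b') :
    G α a b ≤ G α a' b' := by
  have h1 : a' ^ (-α) + b' ^ (-α) ≤ a ^ (-α) + b ^ (-α) :=
    add_le_add (Real.rpow_le_rpow_of_nonpos ha ha' (by linarith))
      (Real.rpow_le_rpow_of_nonpos hb hb' (by linarith))
  refine Real.rpow_le_rpow_of_nonpos (S_pos (ha.trans_le ha') (hb.trans_le hb')) h1 ?_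
  rw [neg_div]; exact neg_nonpos.mpr (div_nonneg zero_le_one hα.le)

/-- key step: adding `s` to the first coordinate increases `G` by at most `s`. -/
lemma G_key (hα : 0 < α) (ha : 0 < a) (hb : 0 < b) {s : ℝ} (hs : 0 ≤ s) :
    G α (a + s) b ≤ G α a b + s := by
  rcases eq_or_lt_of_le hs with rfl | hs
  · simp
  set g := G α a b with hg
  have hgpos : 0 < g := G_pos ha hb
  have hga : g < a := G_lt_left hα ha hb
  -- slope inequality
  have hc := convexOn_neg_rpow hα
  set h : ℝ → ℝ := fun t : ℝ => t ^ (-α) with hh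
  have m1 := hc.slope_mono (mem_Ioi.mpr hgpos)
  have step1 : slope h g (g + s) ≤ slope h g (a + s) := by
    refine m1 ⟨mem_Ioi.mpr (by linarith), by simp; linarith⟩
      ⟨mem_Ioi.mpr (by linarith), by simp; linarith⟩ (by linarith)
  have m2 := hc.slope_mono (mem_Ioi.mpr (show (0:ℝ) < a + s by linarith))
  have step2 : slope h (a + s) g ≤ slope h (a + s) a := by
    refine m2 ⟨mem_Ioi.mpr hgpos, by simp; linarith⟩
      ⟨mem_Ioi.mpr ha, by simp; linarith⟩ hga.le
  have step3 : slope h g (g + s) ≤ slope h a (a + s) := by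
    calc slope h g (g + s) ≤ slope h g (a + s) := step1
      _ = slope h (a + s) g := slope_comm h g (a + s)
      _ ≤ slope h (a + s) a := step2
      _ = slope h a (a + s) := slope_comm h (a + s) a
  have hslope : (h (g + s) - h g) / s ≤ (h (a + s) - h a) / s := by
    have e1 : slope h g (g + s) = (h (g + s) - h g) / s := by
      rw [slope_def_field]; congr 1; ring
    have e2 : slope h a (a + s) = (h (a + s) - h a) / s := by
      rw [slope_def_field]; congr 1; ring
    rw [← e1, ← e2]; exact step3
  have hdiff : h (g + s) - h g ≤ h (a + s) - h a :=
    (div_le_div_iff_of_pos_right hs).mp hslope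
  have hgval : h g = a ^ (-α) + b ^ (-α) := G_rpow hα ha hb
  have hineq : (g + s) ^ (-α) ≤ (a + s) ^ (-α) + b ^ (-α) := by
    have := Real.rpow_pos_of_pos ha (-α)
    simp only [hh] at hdiff hgval
    linarith
  calc G α (a + s) b = ((a + s) ^ (-α) + b ^ (-α)) ^ (-1 / α) := rfl
    _ ≤ ((g + s) ^ (-α)) ^ (-1 / α) := by
        refine Real.rpow_le_rpow_of_nonpos (Real.rpow_pos_of_pos (by linarith) _) hineq ?_
        rw [neg_div]; exact neg_nonpos.mpr (by positivity)
    _ = g + s := rpow_neg_inv_cancel' hα (by linarith)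

section Part2

lemma G_key' (hα : 0 < α) {a b s : ℝ} (ha : 0 < a) (hb : 0 < b) (hs : 0 ≤ s) :
    G α a (b + s) ≤ G α a b + s := by
  rw [G_comm, G_comm (a := a)]
  exact G_key hα hb ha hs

lemma G_abs (hα : 0 < α) {a b a' b' : ℝ} (ha : 0 < a) (hb : 0 < b) (ha' : 0 < a') (hb' : 0 < b') :
    G α a b ≤ G α a' b' + (|a - a'| + |b - b'|) := by
  have hb'' : 0 < b' + |b - b'| := add_pos_of_pos_of_nonneg hb' (abs_nonneg _)
  have h1 : G α a b ≤ G α (a' + |a - a'|) (b' + |b - b'|) := by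
    refine G_mono hα ha hb ?_ ?_
    · have := le_abs_self (a - a'); linarith
    · have := le_abs_self (b - b'); linarith
  have h2 : G α (a' + |a - a'|) (b' + |b - b'|) ≤ G α a' (b' + |b - b'|) + |a - a'| :=
    G_key hα ha' hb'' (abs_nonneg _)
  have h3 : G α a' (b' + |b - b'|) ≤ G α a' b' + |b - b'| :=
    G_key' hα ha' hb' (abs_nonneg _)
  linarith

lemma fex_eq {x : EuclideanSpace ℝ (Fin 2)} (hx0 : x 0 ≠ 0) (hx1 : x 1 ≠ 0) :
    fex α x = G α |x 0| |x 1| := by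
  rw [fex, if_pos ⟨hx0, hx1⟩]; rfl

lemma fex_nonneg (α : ℝ) (x : EuclideanSpace ℝ (Fin 2)) : 0 ≤ fex α x := by
  rw [fex]
  split
  · exact Real.rpow_nonneg (by positivity) _
  · exact le_refl 0

lemma fex_sub_le (hα : 0 < α) (x y : EuclideanSpace ℝ (Fin 2)) :
    fex α x - fex α y ≤ |x 0 - y 0| + |x 1 - y 1| := by
  by_cases hx : x 0 ≠ 0 ∧ x 1 ≠ 0
  · rw [fex_eq hx.1 hx.2]
    have hx0 : 0 < |x 0| := abs_pos.mpr hx.1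
    have hx1 : 0 < |x 1| := abs_pos.mpr hx.2
    by_cases hy : y 0 ≠ 0 ∧ y 1 ≠ 0
    · rw [fex_eq hy.1 hy.2]
      have hy0 : 0 < |y 0| := abs_pos.mpr hy.1
      have hy1 : 0 < |y 1| := abs_pos.mpr hy.2
      have h := G_abs hα (α := α) hx0 hx1 hy0 hy1
      have h0 : abs (|x 0| - |y 0|) ≤ |x 0 - y 0| := abs_abs_sub_abs_le_abs_sub _ _
      have h1 : abs (|x 1| - |y 1|) ≤ |x 1 - y 1| := abs_abs_sub_abs_le_abs_sub _ _
      have h0' := le_abs_self (|x 0| - |y 0|)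
      have h1' := le_abs_self (|x 1| - |y 1|)
      linarith
    · -- fex y = 0
      rw [fex, if_neg hy]
      push_neg at hy
      rcases ne_or_eq (y 0) 0 with hy0 | hy0
      · have hy1 : y 1 = 0 := hy hy0
        have : G α |x 0| |x 1| < |x 1| := by rw [G_comm]; exact G_lt_left hα hx1 hx0
        have h1 : |x 1| = |x 1 - y 1| := by rw [hy1, sub_zero]
        have := abs_nonneg (x 0 - y 0)
        linarith
      · have : G α |x 0| |x 1| < |x 0| := G_lt_left hα hx0 hx1
        have h1 : |x 0| = |x 0 - y 0| := by rw [hy0, sub_zero]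
        have := abs_nonneg (x 1 - y 1)
        linarith
  · rw [fex, if_neg hx]
    have := fex_nonneg α y
    have := abs_nonneg (x 0 - y 0)
    have := abs_nonneg (x 1 - y 1)
    linarith

lemma coord_abs_le_norm (v : EuclideanSpace ℝ (Fin 2)) (i : Fin 2) : |v i| ≤ ‖v‖ := by
  rw [EuclideanSpace.norm_eq]
  have h : ‖v i‖ ^ 2 ≤ ∑ j, ‖v j‖ ^ 2 :=
    Finset.single_le_sum (fun j _ => sq_nonneg ‖v j‖) (Finset.mem_univ i)
  calc |v i| = Real.sqrt (‖v i‖ ^ 2) := by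
        rw [Real.sqrt_sq (norm_nonneg _), Real.norm_eq_abs]
    _ ≤ _ := Real.sqrt_le_sqrt h


lemma fex_smul (hα : 0 < α) {c : ℝ} (hc : 0 < c) (x : EuclideanSpace ℝ (Fin 2)) :
    fex α (c • x) = c * fex α x := by
  have hc' : c ≠ 0 := ne_of_gt hc
  have hs0 : (c • x) 0 = c * x 0 := rfl
  have hs1 : (c • x) 1 = c * x 1 := rfl
  by_cases hx : x 0 ≠ 0 ∧ x 1 ≠ 0
  · rw [fex, fex, if_pos hx, if_pos ⟨by rw [hs0]; exact mul_ne_zero hc' hx.1,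
      by rw [hs1]; exact mul_ne_zero hc' hx.2⟩]
    rw [hs0, hs1, abs_mul, abs_mul, abs_of_pos hc,
      Real.mul_rpow hc.le (abs_nonneg _), Real.mul_rpow hc.le (abs_nonneg _), ← mul_add,
      Real.mul_rpow (Real.rpow_nonneg hc.le _) (S_pos (abs_pos.mpr hx.1) (abs_pos.mpr hx.2)).le,
      rpow_neg_inv_cancel' hα hc]
  · rw [fex, fex, if_neg hx, if_neg, mul_zero]
    intro ⟨h0, h1⟩
    rw [hs0] at h0; rw [hs1] at h1
    exact hx ⟨fun h => h0 (by rw [h, mul_zero]), fun h => h1 (by rw [h, mul_zero])⟩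

lemma fex_zero (α : ℝ) : fex α (0 : EuclideanSpace ℝ (Fin 2)) = 0 := by
  rw [fex, if_neg]
  intro ⟨h0, _⟩
  exact h0 rfl


end Part2

end S11

open S11 in
/-- `f` is positively 1-homogeneous and Lipschitz continuous on `ℝ²`,
but not continuously differentiable. -/
theorem stmt11 (α : ℝ) (hα : 0 < α) :
    (∀ c : ℝ, 0 < c → ∀ x : EuclideanSpace ℝ (Fin 2), fex α (c • x) = c * fex α x)
    ∧ (∃ K : NNReal, LipschitzWith K (fex α))
    ∧ ¬ ContDiff ℝ 1 (fex α) := by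
  refine ⟨fun c hc x => fex_smul hα hc x, ?_, ?_⟩
  · refine ⟨2, LipschitzWith.of_dist_le_mul fun x y => ?_⟩
    rw [Real.dist_eq, dist_eq_norm]
    have h0 : |x 0 - y 0| ≤ ‖x - y‖ := by
      have := coord_abs_le_norm (x - y) 0; simpa using this
    have h1 : |x 1 - y 1| ≤ ‖x - y‖ := by
      have := coord_abs_le_norm (x - y) 1; simpa using this
    have hxy := fex_sub_le hα x y
    have hyx := fex_sub_le hα y x
    have habs : |fex α x - fex α y| ≤ |x 0 - y 0| + |x 1 - y 1| := by
      rw [abs_sub_le_iff]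
      constructor
      · exact hxy
      · rw [abs_sub_comm (x 0), abs_sub_comm (x 1)]; exact hyx
    have : ((2 : NNReal) : ℝ) = 2 := by norm_num
    rw [this]
    linarith
  · intro hC
    have hdiff : DifferentiableAt ℝ (fex α) 0 :=
      (hC.differentiable one_ne_zero).differentiableAt
    set L := fderiv ℝ (fex α) 0 with hLdef
    have hL : HasFDerivAt (fex α) L 0 := hdiff.hasFDerivAt
    have hlim : ∀ v : EuclideanSpace ℝ (Fin 2), L v = fex α v := by
      intro v
      have hc : Filter.Tendsto (fun n : ℕ => ‖(n : ℝ)‖) Filter.atTop Filter.atTop := by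
        simp only [Real.norm_natCast]
        exact tendsto_natCast_atTop_atTop
      have h1 := hL.lim v hc
      have h2 : ∀ᶠ n : ℕ in Filter.atTop,
          (n : ℝ) • (fex α ((0 : EuclideanSpace ℝ (Fin 2)) + ((n : ℝ))⁻¹ • v)
            - fex α 0) = fex α v := by
        filter_upwards [Filter.eventually_gt_atTop 0] with n hn
        have hn0 : (0 : ℝ) < (n : ℝ) := by exact_mod_cast hn
        have hn' : (0 : ℝ) < ((n : ℝ))⁻¹ := by positivity
        rw [zero_add, fex_smul hα hn' v, fex_zero, sub_zero, smul_eq_mul]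
        field_simp
      exact tendsto_nhds_unique (h1.congr' h2) tendsto_const_nhds
    set e0 : EuclideanSpace ℝ (Fin 2) := EuclideanSpace.single 0 1 with he0
    set e1 : EuclideanSpace ℝ (Fin 2) := EuclideanSpace.single 1 1 with he1
    have hv0 : (e0 + e1) 0 = 1 := by
      simp [he0, he1, EuclideanSpace.single_apply]
    have hv1 : (e0 + e1) 1 = 1 := by
      simp [he0, he1, EuclideanSpace.single_apply]
    have hfe0 : fex α e0 = 0 := by
      rw [fex, if_neg]
      intro ⟨_, h⟩
      exact h (by simp [he0, EuclideanSpace.single_apply])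
    have hfe1 : fex α e1 = 0 := by
      rw [fex, if_neg]
      intro ⟨h, _⟩
      exact h (by simp [he1, EuclideanSpace.single_apply])
    have hfv : 0 < fex α (e0 + e1) := by
      rw [fex, if_pos ⟨by rw [hv0]; norm_num, by rw [hv1]; norm_num⟩]
      positivity
    have : fex α (e0 + e1) = fex α e0 + fex α e1 := by
      rw [← hlim, ← hlim, ← hlim, map_add]
    rw [this, hfe0, hfe1] at hfv
    norm_num at hfv
end
end

section
/- For every δ ∈ (0,1) and any two distinct partitions 𝒞 ≠ 𝒟 of N, the intersection Ξ^{(δ)}_𝒞 ∩ Ξ^{(δ)}_𝒟 has Lebesgue measure zero in M; moreover the union over all partitions 𝒞 of N of the sets Ξ^{(δ)}_𝒞 equals M. -/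
open scoped BigOperators
open Filter MeasureTheory

noncomputable section

/-- A partition (cluster decomposition) of `N = {1,…,n}`. -/
def IsPartition {n : ℕ} (𝒞 : Finset (Finset (Fin n))) : Prop :=
  (∀ C ∈ 𝒞, C.Nonempty) ∧
  (∀ C ∈ 𝒞, ∀ D ∈ 𝒞, C ≠ D → Disjoint C D) ∧
  (∀ i : Fin n, ∃ C ∈ 𝒞, i ∈ C)

/-- `i` and `j` lie in the same atom of `𝒞`, i.e. `[i]_𝒞 = [j]_𝒞`. -/
def sameAtom {n : ℕ} (𝒞 : Finset (Finset (Fin n))) (i j : Fin n) : Prop :=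
  ∃ C ∈ 𝒞, i ∈ C ∧ j ∈ C

/-- The finest partition, into singletons. -/
def cMin (n : ℕ) : Finset (Finset (Fin n)) :=
  Finset.univ.image fun i : Fin n => ({i} : Finset (Fin n))

/-- `Δ^E_C` for a subset `C ⊆ N`. -/
def deltaEC {d n : ℕ} (m : Fin n → ℝ) (C : Finset (Fin n)) : Set (Vec d n) :=
  {q | q ∈ configSet m ∧ ∀ i ∈ C, ∀ j ∈ C, q i = q j}

/-- `Δ^E_𝒞` for a partition `𝒞`. -/
def deltaEPart {d n : ℕ} (m : Fin n → ℝ) (𝒞 : Finset (Finset (Fin n))) : Set (Vec d n) :=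
  {q | q ∈ configSet m ∧ ∀ i j : Fin n, sameAtom 𝒞 i j → q i = q j}

/-- `Δ^I_C`, the mass-orthogonal complement of `Δ^E_C` in `M`. -/
def deltaIC {d n : ℕ} (m : Fin n → ℝ) (C : Finset (Fin n)) : Set (Vec d n) :=
  {q | q ∈ configSet m ∧ (∀ i ∉ C, q i = 0) ∧ ∑ i ∈ C, m i • q i = 0}

/-- `𝒞 ≼ 𝒟` : `𝒞` refines `𝒟`. -/
def Refines {n : ℕ} (𝒞 𝒟 : Finset (Finset (Fin n))) : Prop :=
  ∀ C ∈ 𝒞, ∃ D ∈ 𝒟, C ⊆ D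
/-- `M` as a submodule. -/
def configSub {d n : ℕ} (m : Fin n → ℝ) : Submodule ℝ (Vec d n) where
  carrier := configSet m
  add_mem' := by
    intro a b ha hb
    simp only [configSet, Set.mem_setOf_eq, Pi.add_apply, smul_add,
      Finset.sum_add_distrib] at ha hb ⊢
    rw [ha, hb, add_zero]
  zero_mem' := by simp [configSet]
  smul_mem' := by
    intro c a ha
    simp only [configSet, Set.mem_setOf_eq, Pi.smul_apply] at ha ⊢
    have h : ∑ i : Fin n, m i • c • a i = c • ∑ i : Fin n, m i • a i := by
      rw [Finset.smul_sum]
      exact Finset.sum_congr rfl fun i _ => smul_comm (m i) c (a i)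
    rw [h, ha, smul_zero]

lemma massInner_add_left {d n : ℕ} (m : Fin n → ℝ) (a b p : Vec d n) :
    massInner m (a + b) p = massInner m a p + massInner m b p := by
  simp only [massInner, Pi.add_apply, inner_add_left, mul_add, Finset.sum_add_distrib]

lemma massInner_smul_left {d n : ℕ} (m : Fin n → ℝ) (c : ℝ) (a p : Vec d n) :
    massInner m (c • a) p = c * massInner m a p := by
  simp only [massInner, Pi.smul_apply, real_inner_smul_left, Finset.mul_sum]
  exact Finset.sum_congr rfl fun i _ => by ring

/-- `Δ^E_𝒞` as a submodule. -/
def deltaEPartSub {d n : ℕ} (m : Fin n → ℝ) (𝒞 : Finset (Finset (Fin n))) :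
    Submodule ℝ (Vec d n) where
  carrier := deltaEPart m 𝒞
  add_mem' := by
    intro a b ha hb
    exact ⟨(configSub m).add_mem ha.1 hb.1, fun i j h => by
      simp only [Pi.add_apply, ha.2 i j h, hb.2 i j h]⟩
  zero_mem' := ⟨(configSub m).zero_mem, fun i j _ => rfl⟩
  smul_mem' := by
    intro c a ha
    exact ⟨(configSub m).smul_mem c ha.1, fun i j h => by
      simp only [Pi.smul_apply, ha.2 i j h]⟩

/-- `Δ^I_𝒞`, the mass-orthogonal complement of `Δ^E_𝒞` in `M`, as a submodule. -/
def deltaIPartSub {d n : ℕ} (m : Fin n → ℝ) (𝒞 : Finset (Finset (Fin n))) :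
    Submodule ℝ (Vec d n) where
  carrier := {q | q ∈ configSet m ∧ ∀ p ∈ deltaEPart m 𝒞, massInner m q p = 0}
  add_mem' := by
    intro a b ha hb
    refine ⟨(configSub m).add_mem ha.1 hb.1, fun p hp => ?_⟩
    rw [massInner_add_left, ha.2 p hp, hb.2 p hp, add_zero]
  zero_mem' := by
    refine ⟨(configSub m).zero_mem, fun p hp => ?_⟩
    simp [massInner]
  smul_mem' := by
    intro c a ha
    refine ⟨(configSub m).smul_mem c ha.1, fun p hp => ?_⟩
    rw [massInner_smul_left, ha.2 p hp, mul_zero]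
/-- `J^E_𝒞(q) = ∑_{C∈𝒞} m_C ‖q_C‖²`, the cluster barycenter moment of inertia. -/
def JEfun {d n : ℕ} (m : Fin n → ℝ) (𝒞 : Finset (Finset (Fin n))) (q : Vec d n) : ℝ :=
  ∑ C ∈ 𝒞, (∑ j ∈ C, m j) * ‖(∑ j ∈ C, m j)⁻¹ • ∑ j ∈ C, m j • q j‖ ^ 2

/-- The Graf atom `Ξ^{(δ)}_𝒞`: the set where `J^E_𝒞 + δ^{|𝒞|}` realizes the maximum
`J^{(δ)}` over all partitions. -/
def GrafSet {d n : ℕ} (m : Fin n → ℝ) (δ : ℝ) (𝒞 : Finset (Finset (Fin n))) :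
    Set (Vec d n) :=
  {q | ∀ 𝒟 : Finset (Finset (Fin n)), IsPartition 𝒟 →
      JEfun m 𝒟 q + δ ^ 𝒟.card ≤ JEfun m 𝒞 q + δ ^ 𝒞.card}


section AuxStmt16
variable {d n : ℕ}

lemma isPartition_cMin : IsPartition (cMin n) := by
  refine ⟨fun C hC => ?_, fun C hC D hD hne => ?_, fun i => ?_⟩
  · simp only [cMin, Finset.mem_image] at hC
    obtain ⟨i, -, rfl⟩ := hC
    exact Finset.singleton_nonempty i
  · simp only [cMin, Finset.mem_image] at hC hD
    obtain ⟨i, -, rfl⟩ := hC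
    obtain ⟨j, -, rfl⟩ := hD
    simp only [Finset.disjoint_singleton]
    intro h; exact hne (by rw [h])
  · exact ⟨{i}, Finset.mem_image_of_mem _ (Finset.mem_univ i), Finset.mem_singleton_self i⟩

lemma atom_unique {𝒞 : Finset (Finset (Fin n))} (h : IsPartition 𝒞)
    {C D : Finset (Fin n)} (hC : C ∈ 𝒞) (hD : D ∈ 𝒞) {i : Fin n}
    (hiC : i ∈ C) (hiD : i ∈ D) : C = D := by
  by_contra hne
  exact Finset.disjoint_left.mp (h.2.1 C hC D hD hne) hiC hiD

lemma partition_subset_of_sameAtom {𝒞 𝒟 : Finset (Finset (Fin n))}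
    (h𝒞 : IsPartition 𝒞) (h𝒟 : IsPartition 𝒟)
    (h : ∀ i j, sameAtom 𝒞 i j ↔ sameAtom 𝒟 i j) : 𝒞 ⊆ 𝒟 := by
  intro C hC
  obtain ⟨i, hi⟩ := h𝒞.1 C hC
  obtain ⟨D, hD, hiD⟩ := h𝒟.2.2 i
  have : C = D := by
    apply Finset.ext
    intro j
    constructor
    · intro hj
      obtain ⟨D', hD', hiD', hjD'⟩ := (h i j).mp ⟨C, hC, hi, hj⟩
      rwa [atom_unique h𝒟 hD hD' hiD hiD']
    · intro hj
      obtain ⟨C', hC', hiC', hjC'⟩ := (h i j).mpr ⟨D, hD, hiD, hj⟩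
      rwa [atom_unique h𝒞 hC hC' hi hiC']
  rwa [this]

lemma exists_sameAtom_diff {𝒞 𝒟 : Finset (Finset (Fin n))}
    (h𝒞 : IsPartition 𝒞) (h𝒟 : IsPartition 𝒟) (hne : 𝒞 ≠ 𝒟) :
    ∃ i j, (sameAtom 𝒞 i j ∧ ¬ sameAtom 𝒟 i j) ∨ (sameAtom 𝒟 i j ∧ ¬ sameAtom 𝒞 i j) := by
  by_contra hcon
  push_neg at hcon
  have h : ∀ i j, sameAtom 𝒞 i j ↔ sameAtom 𝒟 i j := by
    intro i j
    exact ⟨(hcon i j).1, (hcon i j).2⟩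
  exact hne (Finset.Subset.antisymm (partition_subset_of_sameAtom h𝒞 h𝒟 h)
    (partition_subset_of_sameAtom h𝒟 h𝒞 fun i j => (h i j).symm))

lemma partition_sum {𝒟 : Finset (Finset (Fin n))} (h : IsPartition 𝒟) (g : Fin n → ℝ) :
    ∑ D ∈ 𝒟, ∑ j ∈ D, g j = ∑ j, g j := by
  rw [← Finset.sum_biUnion (fun C hC D hD hne => h.2.1 C hC D hD hne)]
  congr 1
  apply Finset.eq_univ_iff_forall.mpr
  intro i
  obtain ⟨D, hD, hiD⟩ := h.2.2 i
  exact Finset.mem_biUnion.mpr ⟨D, hD, hiD⟩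

lemma cluster_decomp (m : Fin n → ℝ) (hm : ∀ i, 0 < m i) {C : Finset (Fin n)}
    (hC : C.Nonempty) (q : Vec d n) :
    ∑ j ∈ C, m j * ‖q j‖ ^ 2 =
      (∑ j ∈ C, m j) * ‖(∑ j ∈ C, m j)⁻¹ • ∑ j ∈ C, m j • q j‖ ^ 2
      + ∑ j ∈ C, m j * ‖q j - (∑ j ∈ C, m j)⁻¹ • ∑ j ∈ C, m j • q j‖ ^ 2 := by
  set M := ∑ j ∈ C, m j with hM
  have hMpos : 0 < M := Finset.sum_pos (fun j _ => hm j) hC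
  set b : EuclideanSpace ℝ (Fin d) := M⁻¹ • ∑ j ∈ C, m j • q j with hb
  have hs : ∑ j ∈ C, m j • q j = M • b := by rw [hb, smul_inv_smul₀ hMpos.ne']
  have h1 : ∑ j ∈ C, m j * (inner ℝ (q j) b : ℝ) = M * ‖b‖ ^ 2 := by
    have h0 : ∑ j ∈ C, m j * (inner ℝ (q j) b : ℝ) = (inner ℝ (∑ j ∈ C, m j • q j) b : ℝ) := by
      rw [sum_inner]
      exact Finset.sum_congr rfl fun j _ => (real_inner_smul_left _ _ _).symm
    rw [h0, hs, real_inner_smul_left, real_inner_self_eq_norm_sq]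
  calc ∑ j ∈ C, m j * ‖q j‖ ^ 2
      = ∑ j ∈ C, (m j * ‖q j - b‖ ^ 2 + 2 * (m j * (inner ℝ (q j) b : ℝ)) - m j * ‖b‖ ^ 2) := by
        refine Finset.sum_congr rfl fun j _ => ?_
        rw [norm_sub_sq_real]; ring
    _ = (∑ j ∈ C, m j * ‖q j - b‖ ^ 2) + 2 * (∑ j ∈ C, m j * (inner ℝ (q j) b : ℝ))
          - M * ‖b‖ ^ 2 := by
        rw [Finset.sum_sub_distrib, Finset.sum_add_distrib, ← Finset.mul_sum, ← Finset.sum_mul]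
    _ = M * ‖b‖ ^ 2 + ∑ j ∈ C, m j * ‖q j - b‖ ^ 2 := by rw [h1]; ring

lemma cluster_le (m : Fin n → ℝ) (hm : ∀ i, 0 < m i) {C : Finset (Fin n)}
    (hC : C.Nonempty) (q : Vec d n) :
    (∑ j ∈ C, m j) * ‖(∑ j ∈ C, m j)⁻¹ • ∑ j ∈ C, m j • q j‖ ^ 2
      ≤ ∑ j ∈ C, m j * ‖q j‖ ^ 2 := by
  rw [cluster_decomp m hm hC q]
  have h : (0:ℝ) ≤ ∑ j ∈ C, m j * ‖q j - (∑ j ∈ C, m j)⁻¹ • ∑ j ∈ C, m j • q j‖ ^ 2 :=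
    Finset.sum_nonneg fun j _ => mul_nonneg (hm j).le (by positivity)
  linarith

lemma cluster_lt (m : Fin n → ℝ) (hm : ∀ i, 0 < m i) {C : Finset (Fin n)}
    (q : Vec d n) {i j : Fin n} (hi : i ∈ C) (hj : j ∈ C) (hij : q i ≠ q j) :
    (∑ j ∈ C, m j) * ‖(∑ j ∈ C, m j)⁻¹ • ∑ j ∈ C, m j • q j‖ ^ 2
      < ∑ j ∈ C, m j * ‖q j‖ ^ 2 := by
  rw [cluster_decomp m hm ⟨i, hi⟩ q]
  set b : EuclideanSpace ℝ (Fin d) := (∑ j ∈ C, m j)⁻¹ • ∑ j ∈ C, m j • q j with hb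
  have h : (0:ℝ) < ∑ k ∈ C, m k * ‖q k - b‖ ^ 2 := by
    obtain hk : ∃ k ∈ C, q k ≠ b := by
      by_cases h' : q i = b
      · exact ⟨j, hj, fun h'' => hij (h'.trans h''.symm)⟩
      · exact ⟨i, hi, h'⟩
    obtain ⟨k, hkC, hk⟩ := hk
    refine Finset.sum_pos' (fun l _ => mul_nonneg (hm l).le (by positivity)) ⟨k, hkC, ?_⟩
    have : q k - b ≠ 0 := sub_ne_zero.mpr hk
    have hpos : 0 < ‖q k - b‖ := norm_pos_iff.mpr this
    exact mul_pos (hm k) (pow_pos hpos 2)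
  linarith

lemma cluster_const (m : Fin n → ℝ) (hm : ∀ i, 0 < m i) {C : Finset (Fin n)}
    (hC : C.Nonempty) (q : Vec d n) (hq : ∀ k ∈ C, ∀ l ∈ C, q k = q l) :
    (∑ j ∈ C, m j) * ‖(∑ j ∈ C, m j)⁻¹ • ∑ j ∈ C, m j • q j‖ ^ 2
      = ∑ j ∈ C, m j * ‖q j‖ ^ 2 := by
  rw [cluster_decomp m hm hC q]
  have hMpos : 0 < ∑ j ∈ C, m j := Finset.sum_pos (fun j _ => hm j) hC
  obtain ⟨j0, hj0⟩ := hC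
  have hbval : (∑ j ∈ C, m j)⁻¹ • ∑ j ∈ C, m j • q j = q j0 := by
    have h0 : ∑ j ∈ C, m j • q j = (∑ j ∈ C, m j) • q j0 := by
      rw [Finset.sum_smul]
      exact Finset.sum_congr rfl fun j hj => by rw [hq j hj j0 hj0]
    rw [h0, inv_smul_smul₀ hMpos.ne']
  have hz : ∑ j ∈ C, m j * ‖q j - (∑ j ∈ C, m j)⁻¹ • ∑ j ∈ C, m j • q j‖ ^ 2 = 0 := by
    refine Finset.sum_eq_zero fun j hj => ?_
    rw [hbval, hq j hj j0 hj0, sub_self, norm_zero]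
    ring
  rw [hz, add_zero]

lemma JE_le (m : Fin n → ℝ) (hm : ∀ i, 0 < m i) {𝒞 : Finset (Finset (Fin n))}
    (h𝒞 : IsPartition 𝒞) (q : Vec d n) :
    JEfun m 𝒞 q ≤ ∑ k, m k * ‖q k‖ ^ 2 := by
  rw [← partition_sum h𝒞 (fun k => m k * ‖q k‖ ^ 2)]
  exact Finset.sum_le_sum fun C hC => cluster_le m hm (h𝒞.1 C hC) q

lemma JE_lt (m : Fin n → ℝ) (hm : ∀ i, 0 < m i) {𝒞 : Finset (Finset (Fin n))}
    (h𝒞 : IsPartition 𝒞) (q : Vec d n) {i j : Fin n}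
    (hij : sameAtom 𝒞 i j) (hq : q i ≠ q j) :
    JEfun m 𝒞 q < ∑ k, m k * ‖q k‖ ^ 2 := by
  rw [← partition_sum h𝒞 (fun k => m k * ‖q k‖ ^ 2)]
  obtain ⟨C0, hC0, hi, hj⟩ := hij
  exact Finset.sum_lt_sum (fun C hC => cluster_le m hm (h𝒞.1 C hC) q)
    ⟨C0, hC0, cluster_lt m hm q hi hj hq⟩

lemma JE_eq (m : Fin n → ℝ) (hm : ∀ i, 0 < m i) {𝒟 : Finset (Finset (Fin n))}
    (h𝒟 : IsPartition 𝒟) (q : Vec d n)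
    (hconst : ∀ i j, sameAtom 𝒟 i j → q i = q j) :
    JEfun m 𝒟 q = ∑ k, m k * ‖q k‖ ^ 2 := by
  rw [← partition_sum h𝒟 (fun k => m k * ‖q k‖ ^ 2)]
  exact Finset.sum_congr rfl fun D hD =>
    cluster_const m hm (h𝒟.1 D hD) q (fun k hk l hl => hconst k l ⟨D, hD, hk, hl⟩)

lemma exists_wit (hd : 1 ≤ d) (m : Fin n → ℝ) (hm : ∀ i, 0 < m i)
    {𝒞 𝒟 : Finset (Finset (Fin n))} (h𝒞 : IsPartition 𝒞) (h𝒟 : IsPartition 𝒟)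
    {i j : Fin n} (hij : sameAtom 𝒞 i j) (hnij : ¬ sameAtom 𝒟 i j) :
    ∃ q0 ∈ configSet (d := d) m, JEfun m 𝒞 q0 < JEfun m 𝒟 q0 := by
  obtain ⟨Di, hDi, hiDi⟩ := h𝒟.2.2 i
  have hjDi : j ∉ Di := fun hj => hnij ⟨Di, hDi, hiDi, hj⟩
  set a : ℝ := ∑ k ∈ Di, m k with ha
  set bs : ℝ := ∑ k ∈ Finset.univ \ Di, m k with hbs
  have hapos : 0 < a := Finset.sum_pos (fun k _ => hm k) ⟨i, hiDi⟩
  have hbpos : 0 < bs := Finset.sum_pos (fun k _ => hm k)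
    ⟨j, Finset.mem_sdiff.mpr ⟨Finset.mem_univ j, hjDi⟩⟩
  set c : ℝ := -a / bs with hc
  have hcneg : c < 0 := div_neg_of_neg_of_pos (neg_lt_zero.mpr hapos) hbpos
  set e : EuclideanSpace ℝ (Fin d) := EuclideanSpace.single (⟨0, hd⟩ : Fin d) (1:ℝ) with he
  have hene : e ≠ 0 := by
    intro h
    have h1 : e (⟨0, hd⟩ : Fin d) = 1 := by simp [he]
    rw [h] at h1
    simp at h1
  set q0 : Vec d n := fun k => (if k ∈ Di then (1:ℝ) else c) • e with hq0def
  have hmemcfg : q0 ∈ configSet (d := d) m := by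
    show ∑ k, m k • q0 k = 0
    have h1 : ∀ k, m k • q0 k = (m k * (if k ∈ Di then (1:ℝ) else c)) • e := by
      intro k; rw [hq0def]; rw [smul_smul]
    simp only [h1]
    rw [← Finset.sum_smul]
    have h2 : ∑ k, m k * (if k ∈ Di then (1:ℝ) else c) = 0 := by
      rw [← Finset.sum_sdiff (Finset.subset_univ Di)]
      have h3 : ∑ k ∈ Di, m k * (if k ∈ Di then (1:ℝ) else c) = a := by
        rw [ha]; exact Finset.sum_congr rfl fun k hk => by rw [if_pos hk, mul_one]
      have h4 : ∑ k ∈ Finset.univ \ Di, m k * (if k ∈ Di then (1:ℝ) else c) = bs * c := by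
        rw [hbs, Finset.sum_mul]
        exact Finset.sum_congr rfl fun k hk =>
          by rw [if_neg (Finset.mem_sdiff.mp hk).2]
      rw [h3, h4, hc]
      field_simp
      ring
    rw [h2, zero_smul]
  have hconst : ∀ k l, sameAtom 𝒟 k l → q0 k = q0 l := by
    rintro k l ⟨D, hD, hk, hl⟩
    have hiff : k ∈ Di ↔ l ∈ Di := by
      constructor
      · intro hk'
        rw [← atom_unique h𝒟 hD hDi hk hk'] at hiDi ⊢
        exact hl
      · intro hl'
        rw [← atom_unique h𝒟 hD hDi hl hl'] at hiDi ⊢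
        exact hk
    rw [hq0def]
    simp only
    rw [if_congr hiff rfl rfl]
  have hq0ij : q0 i ≠ q0 j := by
    rw [hq0def]
    simp only [if_pos hiDi, if_neg hjDi, one_smul]
    intro h
    have h2 : (1 - c) • e = 0 := by
      rw [sub_smul, one_smul, sub_eq_zero]
      exact h
    rcases smul_eq_zero.mp h2 with h3 | h3
    · have : (1:ℝ) - c > 0 := by linarith
      linarith [h3]
    · exact hene h3
  refine ⟨q0, hmemcfg, ?_⟩
  rw [JE_eq m hm h𝒟 q0 hconst]
  exact JE_lt m hm h𝒞 q0 hij hq0ij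

lemma JE_exists_ne (hd : 1 ≤ d) (m : Fin n → ℝ) (hm : ∀ i, 0 < m i)
    {𝒞 𝒟 : Finset (Finset (Fin n))} (h𝒞 : IsPartition 𝒞) (h𝒟 : IsPartition 𝒟)
    (hne : 𝒞 ≠ 𝒟) :
    ∃ q0 ∈ configSet (d := d) m, JEfun m 𝒞 q0 ≠ JEfun m 𝒟 q0 := by
  obtain ⟨i, j, h | h⟩ := exists_sameAtom_diff h𝒞 h𝒟 hne
  · obtain ⟨q0, hq0, hlt⟩ := exists_wit hd m hm h𝒞 h𝒟 h.1 h.2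
    exact ⟨q0, hq0, ne_of_lt hlt⟩
  · obtain ⟨q0, hq0, hlt⟩ := exists_wit hd m hm h𝒟 h𝒞 h.1 h.2
    exact ⟨q0, hq0, (ne_of_lt hlt).symm⟩

/-- The mixed term in the expansion of `J^E` along a line. -/
def Bfun (m : Fin n → ℝ) (𝒞 : Finset (Finset (Fin n))) (x v : Vec d n) : ℝ :=
  ∑ C ∈ 𝒞, (∑ j ∈ C, m j) *
    (2 * (inner ℝ ((∑ j ∈ C, m j)⁻¹ • ∑ j ∈ C, m j • x j)
      ((∑ j ∈ C, m j)⁻¹ • ∑ j ∈ C, m j • v j) : ℝ))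

lemma JE_expand (m : Fin n → ℝ) (𝒞 : Finset (Finset (Fin n))) (x v : Vec d n) (t : ℝ) :
    JEfun m 𝒞 (x + t • v) = JEfun m 𝒞 x + t * Bfun m 𝒞 x v + t ^ 2 * JEfun m 𝒞 v := by
  unfold JEfun Bfun
  rw [Finset.mul_sum, Finset.mul_sum, ← Finset.sum_add_distrib, ← Finset.sum_add_distrib]
  refine Finset.sum_congr rfl fun C _ => ?_
  have hsum : ∑ j ∈ C, m j • (x + t • v) j
      = (∑ j ∈ C, m j • x j) + t • ∑ j ∈ C, m j • v j := by
    rw [Finset.smul_sum, ← Finset.sum_add_distrib]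
    refine Finset.sum_congr rfl fun j _ => ?_
    simp only [Pi.add_apply, Pi.smul_apply, smul_add]
    rw [smul_comm]
  rw [hsum, smul_add, smul_comm ((∑ j ∈ C, m j)⁻¹) t]
  rw [norm_add_sq_real, real_inner_smul_right, norm_smul t, Real.norm_eq_abs, mul_pow, sq_abs]
  ring

lemma JE_zero (m : Fin n → ℝ) (𝒞 : Finset (Finset (Fin n))) :
    JEfun m 𝒞 (0 : Vec d n) = 0 := by
  simp [JEfun]

lemma JE_cont (m : Fin n → ℝ) (𝒞 : Finset (Finset (Fin n))) :
    Continuous fun q : Vec d n => JEfun m 𝒞 q := by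
  unfold JEfun
  refine continuous_finset_sum _ fun C _ => Continuous.mul continuous_const ?_
  fun_prop

open MeasureTheory in
lemma line_null {E : Type*} [NormedAddCommGroup E] [NormedSpace ℝ E] [FiniteDimensional ℝ E]
    [MeasurableSpace E] [BorelSpace E]
    (μ : Measure E) [μ.IsAddHaarMeasure] (v : E) (hv : v ≠ 0) {Z : Set E} (hZ : MeasurableSet Z)
    (hfin : ∀ x : E, {t : ℝ | x + t • v ∈ Z}.Finite) : μ Z = 0 := by
  obtain ⟨W, hW⟩ := Submodule.exists_isCompl (ℝ ∙ v)
  let e1 : ℝ ≃ₗ[ℝ] (ℝ ∙ v) := LinearEquiv.toSpanNonzeroSingleton ℝ E v hv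
  let ψ₀ : (↥W × ℝ) ≃ₗ[ℝ] (↥W × ↥(ℝ ∙ v)) := (LinearEquiv.refl ℝ ↥W).prodCongr e1
  let ψ : (↥W × ℝ) ≃ₗ[ℝ] E :=
    ψ₀.trans (Submodule.prodEquivOfIsCompl W (ℝ ∙ v) hW.symm)
  have hψ : ∀ (w : W) (t : ℝ), ψ (w, t) = (w : E) + t • v := by
    intro w t
    simp [ψ, ψ₀, e1, Submodule.coe_prodEquivOfIsCompl',
      LinearEquiv.toSpanNonzeroSingleton]
  let ψc := ψ.toContinuousLinearEquiv
  let ν : Measure (W × ℝ) := ((Module.Basis.ofVectorSpace ℝ W).addHaar).prod volume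
  have h1 : μ = μ.addHaarScalarFactor (ν.map ψc) • (ν.map ψc) :=
    Measure.isAddLeftInvariant_eq_smul μ (ν.map ψc)
  rw [h1]
  simp only [Measure.smul_apply, smul_eq_mul]
  have h0 : (ν.map ψc) Z = 0 := by
    rw [Measure.map_apply ψc.continuous.measurable hZ]
    have hmeas : MeasurableSet (⇑ψc ⁻¹' Z) := hZ.preimage ψc.continuous.measurable
    rw [Measure.measure_prod_null hmeas]
    refine Filter.Eventually.of_forall fun w => ?_
    have hset : (Prod.mk w ⁻¹' (⇑ψc ⁻¹' Z)) = {t : ℝ | (w : E) + t • v ∈ Z} := by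
      ext t
      simp only [Set.mem_preimage, Set.mem_setOf_eq]
      rw [show ψc (w, t) = ψ (w, t) from rfl, hψ]
    show volume (Prod.mk w ⁻¹' (⇑ψc ⁻¹' Z)) = 0
    rw [hset]
    exact ((hfin w).measure_zero _)
  rw [h0, smul_zero]

end AuxStmt16

/-- For the Graf partition: distinct Graf atoms `Ξ^{(δ)}_𝒞`, `Ξ^{(δ)}_𝒟`
intersect in a set of Lebesgue (Haar) measure zero in `M`, and the union of all Graf atoms
is all of `M`. -/
theorem stmt16 {d n : ℕ} (hd : 1 ≤ d) (hn : 2 ≤ n)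
    (m : Fin n → ℝ) (hm : ∀ i, 0 < m i)
    (δ : ℝ) (hδ0 : 0 < δ) (hδ1 : δ < 1)
    (μ : Measure ↥(configSub (d := d) m)) (hμ : μ.IsAddHaarMeasure) :
    (∀ 𝒞 𝒟 : Finset (Finset (Fin n)), IsPartition 𝒞 → IsPartition 𝒟 → 𝒞 ≠ 𝒟 →
      μ (Subtype.val ⁻¹' (GrafSet (d := d) m δ 𝒞 ∩ GrafSet m δ 𝒟)) = 0)
    ∧ (⋃ (𝒞 : Finset (Finset (Fin n))) (_ : IsPartition 𝒞),
        (Subtype.val ⁻¹' GrafSet (d := d) m δ 𝒞 : Set ↥(configSub (d := d) m)))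
      = Set.univ := by
  classical
  haveI := hμ
  constructor
  · intro 𝒞 𝒟 h𝒞 h𝒟 hne
    obtain ⟨q0, hq0mem, hq0ne⟩ := JE_exists_ne hd m hm h𝒞 h𝒟 hne
    set v : ↥(configSub (d := d) m) := ⟨q0, hq0mem⟩ with hvdef
    have hvne : v ≠ 0 := by
      intro h
      apply hq0ne
      have hq00 : q0 = 0 := congrArg Subtype.val h
      rw [hq00, JE_zero, JE_zero]
    set F : ↥(configSub (d := d) m) → ℝ := fun x =>
      (JEfun m 𝒞 x.val + δ ^ 𝒞.card) - (JEfun m 𝒟 x.val + δ ^ 𝒟.card) with hF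
    have hFcont : Continuous F :=
      (((JE_cont m 𝒞).comp continuous_subtype_val).add continuous_const).sub
        (((JE_cont m 𝒟).comp continuous_subtype_val).add continuous_const)
    have hZmeas : MeasurableSet (F ⁻¹' {0}) := hFcont.measurable (measurableSet_singleton 0)
    have hsub : Subtype.val ⁻¹' (GrafSet (d := d) m δ 𝒞 ∩ GrafSet m δ 𝒟) ⊆ F ⁻¹' {0} := by
      rintro x ⟨hx1, hx2⟩
      have h1 := hx1 𝒟 h𝒟
      have h2 := hx2 𝒞 h𝒞
      have h3 : F x = 0 := by rw [hF]; dsimp only; linarith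
      exact h3
    refine measure_mono_null hsub ?_
    set A : ℝ := JEfun m 𝒞 q0 - JEfun m 𝒟 q0 with hA
    have hAne : A ≠ 0 := sub_ne_zero.mpr hq0ne
    refine line_null μ v hvne hZmeas ?_
    intro x
    set B : ℝ := Bfun m 𝒞 x.val q0 - Bfun m 𝒟 x.val q0 with hB
    set P : Polynomial ℝ := Polynomial.C (F x) + Polynomial.C B * Polynomial.X +
      Polynomial.C A * Polynomial.X ^ 2 with hP
    have hPne : P ≠ 0 := by
      intro h
      apply hAne
      have h2 := congrArg (fun p : Polynomial ℝ => Polynomial.coeff p 2) h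
      simpa [hP] using h2
    refine Set.Finite.subset (Polynomial.finite_setOf_isRoot hPne) ?_
    intro t ht
    have hFt : F (x + t • v) = 0 := ht
    have hval : ((x + t • v : ↥(configSub (d := d) m)) : Vec d n) = x.val + t • q0 := rfl
    have hexp : F (x + t • v) = A * t ^ 2 + B * t + F x := by
      simp only [hF, hA, hB, hval]
      rw [JE_expand, JE_expand]
      ring
    show P.IsRoot t
    have heval : P.eval t = A * t ^ 2 + B * t + F x := by
      simp [hP]
      ring
    rw [Polynomial.IsRoot, heval, ← hexp, hFt]
  · ext x
    simp only [Set.mem_iUnion, Set.mem_univ, iff_true]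
    obtain ⟨𝒞, h𝒞s, hmax⟩ := Finset.exists_max_image
      (Finset.univ.filter fun 𝒞 : Finset (Finset (Fin n)) => IsPartition 𝒞)
      (fun 𝒞 => JEfun m 𝒞 x.val + δ ^ 𝒞.card)
      ⟨cMin n, Finset.mem_filter.mpr ⟨Finset.mem_univ _, isPartition_cMin⟩⟩
    exact ⟨𝒞, (Finset.mem_filter.mp h𝒞s).2,
      fun 𝒟 h𝒟 => hmax 𝒟 (Finset.mem_filter.mpr ⟨Finset.mem_univ _, h𝒟⟩)⟩
end
end

section
/- For all 0 < δ_1 < δ_2 ≤ 1/2, the free Graf atoms are nested: Ξ^{(δ_2)}_{𝒞_min} is contained in the topological interior of Ξ^{(δ_1)}_{𝒞_min}. (This rests on the inequality 0 < δ_1^k − δ_1^n < δ_2^k − δ_2^n, valid for all integers 1 ≤ k < n and 0 < δ_1 < δ_2 ≤ 1/2.) -/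
open scoped BigOperators
open Filter MeasureTheory

noncomputable section

/-- Adjacent-exponent case of the key inequality. -/
lemma adj_ineq (δ1 δ2 : ℝ) (h1 : 0 < δ1) (h12 : δ1 < δ2) (h2 : δ2 ≤ 1 / 2)
    (j : ℕ) : δ1 ^ (j + 1) - δ1 ^ (j + 2) < δ2 ^ (j + 1) - δ2 ^ (j + 2) := by
  have h2pos : 0 < δ2 := h1.trans h12
  have hp : δ1 ^ j ≤ δ2 ^ j := pow_le_pow_left₀ h1.le h12.le j
  have hppos : 0 < δ2 ^ j := pow_pos h2pos j
  have hq : δ1 * (1 - δ1) < δ2 * (1 - δ2) := by nlinarith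
  have h3 : δ1 ^ j * (δ1 * (1 - δ1)) < δ2 ^ j * (δ2 * (1 - δ2)) :=
    calc δ1 ^ j * (δ1 * (1 - δ1)) ≤ δ2 ^ j * (δ1 * (1 - δ1)) := by
          apply mul_le_mul_of_nonneg_right hp; nlinarith
      _ < δ2 ^ j * (δ2 * (1 - δ2)) := by
          exact mul_lt_mul_of_pos_left hq hppos
  have e1 : δ1 ^ (j + 1) = δ1 ^ j * δ1 := pow_succ δ1 j
  have e2 : δ1 ^ (j + 2) = δ1 ^ j * δ1 * δ1 := by rw [pow_succ, pow_succ]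
  have e3 : δ2 ^ (j + 1) = δ2 ^ j * δ2 := pow_succ δ2 j
  have e4 : δ2 ^ (j + 2) = δ2 ^ j * δ2 * δ2 := by rw [pow_succ, pow_succ]
  nlinarith [h3]

/-- The key inequality `δ1^k - δ1^n < δ2^k - δ2^n` for `1 ≤ k < n`, `0 < δ1 < δ2 ≤ 1/2`. -/
lemma key_ineq (δ1 δ2 : ℝ) (h1 : 0 < δ1) (h12 : δ1 < δ2) (h2 : δ2 ≤ 1 / 2)
    (k n : ℕ) (hk : 1 ≤ k) (hkn : k < n) : δ1 ^ k - δ1 ^ n < δ2 ^ k - δ2 ^ n := by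
  induction n with
  | zero => omega
  | succ n ih =>
    rcases Nat.lt_or_ge k n with h | h
    · have hadj : δ1 ^ n - δ1 ^ (n + 1) < δ2 ^ n - δ2 ^ (n + 1) := by
        obtain ⟨j, rfl⟩ : ∃ j, n = j + 1 := ⟨n - 1, by omega⟩
        exact adj_ineq δ1 δ2 h1 h12 h2 j
      linarith [ih h]
    · have hkn' : k = n := by omega
      subst hkn'
      obtain ⟨j, rfl⟩ : ∃ j, k = j + 1 := ⟨k - 1, by omega⟩
      exact adj_ineq δ1 δ2 h1 h12 h2 j

lemma cMin_card (n : ℕ) : (cMin n).card = n := by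
  rw [cMin, Finset.card_image_of_injective _ Finset.singleton_injective,
    Finset.card_univ, Fintype.card_fin]

lemma cMin_isPartition (n : ℕ) : IsPartition (cMin n) := by
  refine ⟨?_, ?_, ?_⟩
  · intro C hC
    obtain ⟨i, _, rfl⟩ := Finset.mem_image.mp hC
    exact ⟨i, Finset.mem_singleton_self i⟩
  · intro C hC D hD hne
    obtain ⟨i, _, rfl⟩ := Finset.mem_image.mp hC
    obtain ⟨j, _, rfl⟩ := Finset.mem_image.mp hD
    simp only [Finset.disjoint_singleton]
    intro h; exact hne (by rw [h])
  · intro i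
    exact ⟨{i}, Finset.mem_image.mpr ⟨i, Finset.mem_univ i, rfl⟩, Finset.mem_singleton_self i⟩

lemma part_card_lt {n : ℕ} (hn : 2 ≤ n) {𝒟 : Finset (Finset (Fin n))}
    (h : IsPartition 𝒟) (hne : 𝒟 ≠ cMin n) : 𝒟.card < n := by
  obtain ⟨hnonempty, hdisj, hcov⟩ := h
  have hbi : (𝒟.biUnion fun C => C) = Finset.univ :=
    Finset.eq_univ_iff_forall.mpr fun i => Finset.mem_biUnion.mpr
      (by obtain ⟨C, hC, hiC⟩ := hcov i; exact ⟨C, hC, hiC⟩)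
  have hsum : ∑ C ∈ 𝒟, C.card = n := by
    rw [← Finset.card_biUnion (fun C hC D hD hCD => hdisj C hC D hD hCD), hbi,
      Finset.card_univ, Fintype.card_fin]
  have hterm : ∀ C ∈ 𝒟, 1 ≤ C.card := fun C hC => Finset.card_pos.mpr (hnonempty C hC)
  have hle : 𝒟.card ≤ n := by
    calc 𝒟.card = ∑ _C ∈ 𝒟, 1 := by simp
      _ ≤ ∑ C ∈ 𝒟, C.card := Finset.sum_le_sum hterm
      _ = n := hsum
  rcases lt_or_eq_of_le hle with h | h
  · exact h
  · exfalso
    apply hne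
    have hall : ∀ C ∈ 𝒟, 1 = C.card := by
      apply (Finset.sum_eq_sum_iff_of_le hterm).mp
      rw [hsum]; simp [h]
    have hsub : 𝒟 ⊆ cMin n := by
      intro C hC
      obtain ⟨i, rfl⟩ := Finset.card_eq_one.mp (hall C hC).symm
      exact Finset.mem_image.mpr ⟨i, Finset.mem_univ i, rfl⟩
    exact Finset.eq_of_subset_of_card_le hsub (by rw [cMin_card, h])

lemma continuous_JEfun {d n : ℕ} (m : Fin n → ℝ) (𝒞 : Finset (Finset (Fin n))) :
    Continuous (fun q : Vec d n => JEfun m 𝒞 q) := by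
  unfold JEfun
  apply continuous_finset_sum
  intro C _
  apply Continuous.mul continuous_const
  apply Continuous.pow
  apply Continuous.norm
  apply Continuous.fun_const_smul
  apply continuous_finset_sum
  intro j _
  exact (continuous_apply j).fun_const_smul _

/-- For `0 < δ₁ < δ₂ ≤ 1/2` the free Graf atoms are nested:
`Ξ^{(δ₂)}_{𝒞min} ⊆ int Ξ^{(δ₁)}_{𝒞min}` (interior taken in `M`). This rests on the
inequality `0 < δ₁^k − δ₁^n < δ₂^k − δ₂^n` for integers `1 ≤ k < n`. -/
theorem stmt17 {d n : ℕ} (hd : 1 ≤ d) (hn : 2 ≤ n)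
    (m : Fin n → ℝ) (hm : ∀ i, 0 < m i)
    (δ1 δ2 : ℝ) (h1 : 0 < δ1) (h12 : δ1 < δ2) (h2 : δ2 ≤ 1 / 2) :
    (Subtype.val ⁻¹' GrafSet (d := d) m δ2 (cMin n) : Set ↥(configSub (d := d) m))
      ⊆ interior (Subtype.val ⁻¹' GrafSet m δ1 (cMin n))
    ∧ ∀ k : ℕ, 1 ≤ k → k < n →
        0 < δ1 ^ k - δ1 ^ n ∧ δ1 ^ k - δ1 ^ n < δ2 ^ k - δ2 ^ n := by
  have hkey : ∀ k : ℕ, 1 ≤ k → k < n →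
      0 < δ1 ^ k - δ1 ^ n ∧ δ1 ^ k - δ1 ^ n < δ2 ^ k - δ2 ^ n := by
    intro k hk hkn
    constructor
    · have h1lt : δ1 < 1 := by linarith
      have := pow_lt_pow_right_of_lt_one₀ h1 h1lt hkn
      linarith
    · exact key_ineq δ1 δ2 h1 h12 h2 k n hk hkn
  refine ⟨?_, hkey⟩
  intro q hq
  classical
  -- the open neighborhood
  set U : Set ↥(configSub (d := d) m) :=
    ⋂ 𝒟 : Finset (Finset (Fin n)),
      {x : ↥(configSub (d := d) m) |
        IsPartition 𝒟 ∧ 𝒟 ≠ cMin n →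
          JEfun m 𝒟 x.val + δ1 ^ 𝒟.card < JEfun m (cMin n) x.val + δ1 ^ (cMin n).card}
    with hU
  have hUopen : IsOpen U := by
    apply isOpen_iInter_of_finite
    intro 𝒟
    by_cases h : IsPartition 𝒟 ∧ 𝒟 ≠ cMin n
    · have : {x : ↥(configSub (d := d) m) |
          IsPartition 𝒟 ∧ 𝒟 ≠ cMin n →
            JEfun m 𝒟 x.val + δ1 ^ 𝒟.card < JEfun m (cMin n) x.val + δ1 ^ (cMin n).card}
          = {x : ↥(configSub (d := d) m) |
            JEfun m 𝒟 x.val + δ1 ^ 𝒟.card < JEfun m (cMin n) x.val + δ1 ^ (cMin n).card} := by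
        ext x; simp [h]
      rw [this]
      exact isOpen_lt
        (((continuous_JEfun m 𝒟).comp continuous_subtype_val).add continuous_const)
        (((continuous_JEfun m (cMin n)).comp continuous_subtype_val).add continuous_const)
    · have : {x : ↥(configSub (d := d) m) |
          IsPartition 𝒟 ∧ 𝒟 ≠ cMin n →
            JEfun m 𝒟 x.val + δ1 ^ 𝒟.card < JEfun m (cMin n) x.val + δ1 ^ (cMin n).card}
          = Set.univ := by
        ext x; simp only [Set.mem_setOf_eq, Set.mem_univ, iff_true]
        intro h'; exact absurd h' h
      rw [this]; exact isOpen_univ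
  have hqU : q ∈ U := by
    rw [hU]
    apply Set.mem_iInter.mpr
    intro 𝒟
    rintro ⟨h𝒟, hne⟩
    have hcard : 𝒟.card < n := part_card_lt hn h𝒟 hne
    have hcard1 : 1 ≤ 𝒟.card := by
      obtain ⟨C, hC, _⟩ := h𝒟.2.2 ⟨0, by omega⟩
      exact Finset.card_pos.mpr ⟨C, hC⟩
    have h2ineq := hq 𝒟 h𝒟
    rw [cMin_card] at h2ineq ⊢
    have := (hkey 𝒟.card hcard1 hcard).2
    linarith
  have hUsub : U ⊆ Subtype.val ⁻¹' GrafSet m δ1 (cMin n) := by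
    intro x hx
    intro 𝒟 h𝒟
    by_cases hne : 𝒟 = cMin n
    · subst hne; exact le_refl _
    · have := Set.mem_iInter.mp hx 𝒟 ⟨h𝒟, hne⟩
      exact le_of_lt this
  exact interior_maximal hUsub hUopen hqU
end
end
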